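/- Let f : ℝ³ → (0,∞) be measurable with ∫_{ℝ³}(1+|v|²) f(v) dv < ∞, ρ_f > 0 and T_f > 0, and assume that v ↦ (𝓜(f)(v) − f(v)) ln f(v) is integrable on ℝ³. Then ∫_{ℝ³} (𝓜(f)(v) − f(v)) ln f(v) dv ≤ 0, and the dissipation ∫_{ℝ³} (𝓜(f)(v) − f(v))(ln 𝓜(f)(v) − ln f(v)) dv is nonnegative and equals −∫_{ℝ³} (𝓜(f) − f) ln f dv. -/

import Mathlib

/-!
`ln 𝓜(f)` is an affine function of `|v - U_f|²`, and `𝓜(f)` has the same mass `ρ_f` and the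
same energy `∫ |v - U_f|² = 3 ρ_f T_f` as `f` (the Gaussian moments give
`∫ |x|² e^{-b|x|²} = d/(2b) ∫ e^{-b|x|²}` in dimension `d`). Hence `∫ (𝓜(f) - f) ln 𝓜(f) = 0`,
which is the identity for the dissipation, and the integrand of the dissipation is pointwise
nonnegative because `ln` is increasing.
-/

open MeasureTheory Real
open scoped ENNReal

noncomputable section

/-- Velocity space `ℝ³`. -/
abbrev E3 : Type := EuclideanSpace ℝ (Fin 3)

/-- Local density `ρ_f = ∫ f dv`. -/
def dens (f : E3 → ℝ) : ℝ := ∫ v, f v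

/-- Bulk velocity `U_f`, defined by `ρ_f U_f = ∫ v f dv`. -/
def bulk (f : E3 → ℝ) : E3 := (dens f)⁻¹ • (∫ v, f v • v)

/-- Temperature `T_f`, defined by `3 ρ_f T_f = ∫ |v - U_f|² f dv`. -/
def temp (f : E3 → ℝ) : ℝ := (3 * dens f)⁻¹ * ∫ v, ‖v - bulk f‖ ^ 2 * f v

/-- The local Maxwellian `𝓜(f)(v) = ρ_f (2π T_f)^{-3/2} exp(-|v - U_f|²/(2 T_f))`. -/
def maxw (f : E3 → ℝ) : E3 → ℝ := fun v =>
  dens f * (2 * π * temp f) ^ (-(3 : ℝ) / 2) * Real.exp (-‖v - bulk f‖ ^ 2 / (2 * temp f))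

lemma integral_Ioi_pow_mul_exp_neg_mul_sq (q : ℕ) {b : ℝ} (hb : 0 < b) :
    ∫ y in Set.Ioi (0 : ℝ), y ^ q * rexp (-b * y ^ 2)
      = b ^ (-((q : ℝ) + 1) / 2) / 2 * Gamma (((q : ℝ) + 1) / 2) := by
  have h := integral_rpow_mul_exp_neg_mul_rpow two_pos
    (neg_one_lt_zero.trans_le q.cast_nonneg) hb
  simp only [rpow_natCast, rpow_two] at h
  rw [h]; ring

section Radial

variable {E : Type*} [NormedAddCommGroup E] [NormedSpace ℝ E] [FiniteDimensional ℝ E]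
  [Nontrivial E] [MeasurableSpace E] [BorelSpace E] (μ : Measure E) [μ.IsAddHaarMeasure]

lemma integrable_pow_norm_mul_exp_neg_mul_sq_norm (k : ℕ) {b : ℝ} (hb : 0 < b) :
    Integrable (fun x : E => ‖x‖ ^ k * rexp (-b * ‖x‖ ^ 2)) μ := by
  refine (integrable_fun_norm_addHaar μ (f := fun y : ℝ => y ^ k * rexp (-b * y ^ 2))).2 ?_
  refine (integrableOn_rpow_mul_exp_neg_mul_sq hb (s := ((Module.finrank ℝ E - 1 + k : ℕ) : ℝ))
    (neg_one_lt_zero.trans_le (Nat.cast_nonneg _))).congr_fun (fun y _ => ?_) measurableSet_Ioi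
  simp only [rpow_natCast, pow_add, smul_eq_mul, mul_assoc]

lemma integral_sq_norm_mul_exp_neg_mul_sq_norm {b : ℝ} (hb : 0 < b) :
    ∫ x : E, ‖x‖ ^ 2 * rexp (-b * ‖x‖ ^ 2) ∂μ
      = Module.finrank ℝ E / (2 * b) * ∫ x : E, rexp (-b * ‖x‖ ^ 2) ∂μ := by
  obtain ⟨n, hn⟩ := Nat.exists_eq_succ_of_ne_zero (Module.finrank_pos (R := ℝ) (M := E)).ne'
  rw [integral_fun_norm_addHaar μ (fun y => y ^ 2 * rexp (-b * y ^ 2)),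
    integral_fun_norm_addHaar μ (fun y => rexp (-b * y ^ 2)), hn, Nat.succ_sub_one]
  simp only [smul_eq_mul, nsmul_eq_mul, ← mul_assoc, ← pow_add]
  rw [integral_Ioi_pow_mul_exp_neg_mul_sq _ hb, integral_Ioi_pow_mul_exp_neg_mul_sq _ hb]
  have hΓ : Gamma ((((n + 2 : ℕ) : ℝ) + 1) / 2) = (n + 1) / 2 * Gamma (((n : ℝ) + 1) / 2) := by
    rw [← Gamma_add_one (by positivity)]; push_cast; ring_nf
  have hpow : b ^ (-(((n + 2 : ℕ) : ℝ) + 1) / 2) = b ^ (-((n : ℝ) + 1) / 2) / b := by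
    rw [← rpow_sub_one hb.ne']; push_cast; ring_nf
  rw [hΓ, hpow]
  push_cast
  field_simp

end Radial

lemma integral_exp_neg_mul_sq_norm_sub {b : ℝ} (hb : 0 < b) (U : E3) :
    ∫ v : E3, rexp (-b * ‖v - U‖ ^ 2) = (π / b) ^ ((3 : ℝ) / 2) := by
  rw [integral_sub_right_eq_self (fun v : E3 => rexp (-b * ‖v‖ ^ 2)) U,
    GaussianFourier.integral_rexp_neg_mul_sq_norm hb, finrank_euclideanSpace_fin, Nat.cast_ofNat]

lemma integral_sq_norm_sub_mul_exp_neg_mul_sq_norm_sub {b : ℝ} (hb : 0 < b) (U : E3) :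
    ∫ v : E3, ‖v - U‖ ^ 2 * rexp (-b * ‖v - U‖ ^ 2) = 3 / (2 * b) * (π / b) ^ ((3 : ℝ) / 2) := by
  rw [integral_sub_right_eq_self (fun v : E3 => ‖v‖ ^ 2 * rexp (-b * ‖v‖ ^ 2)) U,
    integral_sq_norm_mul_exp_neg_mul_sq_norm volume hb, ← integral_exp_neg_mul_sq_norm_sub hb 0,
    finrank_euclideanSpace_fin]
  simp

lemma integrable_mul_of_abs_le_mul_one_add_sq_norm {E : Type*} [NormedAddCommGroup E]
    [MeasurableSpace E] [OpensMeasurableSpace E] {μ : Measure E} {f g : E → ℝ} {C : ℝ}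
    (hf : Integrable (fun v => (1 + ‖v‖ ^ 2) * f v) μ) (hg : Continuous g)
    (hgC : ∀ v, |g v| ≤ C * (1 + ‖v‖ ^ 2)) : Integrable (fun v => g v * f v) μ := by
  have hw : ∀ v : E, 0 < 1 + ‖v‖ ^ 2 := fun v => by positivity
  have hgf : (fun v => g v * f v) = fun v => g v / (1 + ‖v‖ ^ 2) * ((1 + ‖v‖ ^ 2) * f v) := by
    funext v; field_simp [(hw v).ne']
  rw [hgf]
  refine hf.bdd_mul (c := C) (hg.div (by fun_prop) fun v => (hw v).ne').aestronglyMeasurable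
    (ae_of_all _ fun v => ?_)
  rw [norm_div, Real.norm_eq_abs, Real.norm_of_nonneg (hw v).le, div_le_iff₀ (hw v)]
  exact hgC v

section Maxwellian

variable {f : E3 → ℝ}

lemma maxw_eq (v : E3) : maxw f v =
    dens f * (2 * π * temp f) ^ (-(3 : ℝ) / 2) * rexp (-(2 * temp f)⁻¹ * ‖v - bulk f‖ ^ 2) := by
  unfold maxw; congr 2; ring

lemma maxw_pos (hρ : 0 < dens f) (hT : 0 < temp f) (v : E3) : 0 < maxw f v := by
  rw [maxw_eq]
  have : 0 < (2 * π * temp f) ^ (-(3 : ℝ) / 2) := by positivity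
  positivity

lemma log_maxw (hρ : dens f ≠ 0) (hT : 0 < temp f) (v : E3) : log (maxw f v) =
    log (dens f * (2 * π * temp f) ^ (-(3 : ℝ) / 2)) - (2 * temp f)⁻¹ * ‖v - bulk f‖ ^ 2 := by
  have : (2 * π * temp f) ^ (-(3 : ℝ) / 2) ≠ 0 := by positivity
  rw [maxw_eq, log_mul (by positivity) (exp_ne_zero _), log_exp]
  ring

lemma integrable_maxw (hT : 0 < temp f) : Integrable (maxw f) := by
  have hg := (integrable_pow_norm_mul_exp_neg_mul_sq_norm (volume : Measure E3) 0
    (inv_pos.2 (mul_pos two_pos hT))).comp_sub_right (bulk f)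
  simp only [pow_zero, one_mul] at hg
  exact (hg.const_mul _).congr (ae_of_all _ fun v => (maxw_eq v).symm)

lemma integrable_sq_norm_sub_bulk_mul_maxw (hT : 0 < temp f) :
    Integrable (fun v => ‖v - bulk f‖ ^ 2 * maxw f v) := by
  have hg := (integrable_pow_norm_mul_exp_neg_mul_sq_norm (volume : Measure E3) 2
    (inv_pos.2 (mul_pos two_pos hT))).comp_sub_right (bulk f)
  simpa only [maxw_eq, mul_left_comm] using
    hg.const_mul (dens f * (2 * π * temp f) ^ (-(3 : ℝ) / 2))

lemma integral_maxw (hT : 0 < temp f) : ∫ v, maxw f v = dens f := by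
  have h2πT : π / (2 * temp f)⁻¹ = 2 * π * temp f := by rw [div_inv_eq_mul]; ring
  simp only [maxw_eq]
  rw [integral_const_mul, integral_exp_neg_mul_sq_norm_sub (inv_pos.2 (mul_pos two_pos hT)),
    h2πT, mul_assoc, ← rpow_add (by positivity)]
  norm_num

lemma integral_sq_norm_sub_bulk_mul_maxw (hT : 0 < temp f) :
    ∫ v, ‖v - bulk f‖ ^ 2 * maxw f v = 3 * dens f * temp f := by
  have hb : 0 < (2 * temp f)⁻¹ := inv_pos.2 (mul_pos two_pos hT)
  have hmass := integral_maxw hT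
  simp only [maxw_eq, integral_const_mul] at hmass ⊢
  simp only [mul_left_comm (‖_ - bulk f‖ ^ 2), integral_const_mul]
  rw [integral_exp_neg_mul_sq_norm_sub hb] at hmass
  have h3T : 3 / (2 * (2 * temp f)⁻¹) = 3 * temp f := by field_simp
  rw [integral_sq_norm_sub_mul_exp_neg_mul_sq_norm_sub hb, h3T]
  linear_combination (3 * temp f) * hmass

lemma integral_sq_norm_sub_bulk_mul (hρ : dens f ≠ 0) :
    ∫ v, ‖v - bulk f‖ ^ 2 * f v = 3 * dens f * temp f := by
  rw [temp]; field_simp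

lemma sub_mul_log_maxw (hρ : dens f ≠ 0) (hT : 0 < temp f) (v : E3) :
    (maxw f v - f v) * log (maxw f v) =
      log (dens f * (2 * π * temp f) ^ (-(3 : ℝ) / 2)) * (maxw f v - f v)
        - (2 * temp f)⁻¹ * (‖v - bulk f‖ ^ 2 * maxw f v - ‖v - bulk f‖ ^ 2 * f v) := by
  rw [log_maxw hρ hT]; ring

variable (hρ : dens f ≠ 0) (hT : 0 < temp f) (hf : Integrable f)
  (hf₂ : Integrable fun v => ‖v - bulk f‖ ^ 2 * f v)
include hρ hT hf hf₂

lemma integrable_sub_mul_log_maxw :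
    Integrable fun v => (maxw f v - f v) * log (maxw f v) := by
  simp_rw [sub_mul_log_maxw hρ hT]
  exact (((integrable_maxw hT).sub hf).const_mul _).sub
    (((integrable_sq_norm_sub_bulk_mul_maxw hT).sub hf₂).const_mul _)

lemma integral_sub_mul_log_maxw : ∫ v, (maxw f v - f v) * log (maxw f v) = 0 := by
  have hmass : Integrable fun v => maxw f v - f v := (integrable_maxw hT).sub hf
  have henergy : Integrable fun v => ‖v - bulk f‖ ^ 2 * maxw f v - ‖v - bulk f‖ ^ 2 * f v :=
    (integrable_sq_norm_sub_bulk_mul_maxw hT).sub hf₂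
  simp_rw [sub_mul_log_maxw hρ hT]
  rw [integral_sub (hmass.const_mul _) (henergy.const_mul _), integral_const_mul,
    integral_const_mul, integral_sub (integrable_maxw hT) hf,
    integral_sub (integrable_sq_norm_sub_bulk_mul_maxw hT) hf₂, integral_maxw hT,
    integral_sq_norm_sub_bulk_mul_maxw hT, integral_sq_norm_sub_bulk_mul hρ]
  simp [dens]

end Maxwellian

theorem stmt_10_general (f : E3 → ℝ) (hf0 : ∀ v, 0 < f v)
    (hint : Integrable (fun v => (1 + ‖v‖ ^ 2) * f v))
    (hρ : 0 < dens f) (hT : 0 < temp f)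
    (hlog : Integrable (fun v => (maxw f v - f v) * Real.log (f v))) :
    (∫ v, (maxw f v - f v) * Real.log (f v)) ≤ 0 ∧
    0 ≤ ∫ v, (maxw f v - f v) * (Real.log (maxw f v) - Real.log (f v)) ∧
    (∫ v, (maxw f v - f v) * (Real.log (maxw f v) - Real.log (f v)))
      = -∫ v, (maxw f v - f v) * Real.log (f v) := by
  have hf : Integrable f := by
    simpa using integrable_mul_of_abs_le_mul_one_add_sq_norm hint continuous_const
      (C := 1) (g := fun _ => 1) fun v => by simp
  have hf₂ : Integrable fun v => ‖v - bulk f‖ ^ 2 * f v := by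
    refine integrable_mul_of_abs_le_mul_one_add_sq_norm hint (by fun_prop)
      (C := 2 + 2 * ‖bulk f‖ ^ 2) fun v => ?_
    have := norm_sub_le v (bulk f)
    rw [abs_of_nonneg (by positivity)]
    nlinarith [norm_nonneg (v - bulk f), sq_nonneg (‖v‖ - ‖bulk f‖), sq_nonneg (‖v‖ * ‖bulk f‖)]
  have hdiss : ∫ v, (maxw f v - f v) * (log (maxw f v) - log (f v))
      = -∫ v, (maxw f v - f v) * log (f v) := by
    simp_rw [mul_sub]
    rw [integral_sub (integrable_sub_mul_log_maxw hρ.ne' hT hf hf₂) hlog,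
      integral_sub_mul_log_maxw hρ.ne' hT hf hf₂, zero_sub]
  have hnonneg : 0 ≤ ∫ v, (maxw f v - f v) * (log (maxw f v) - log (f v)) :=
    integral_nonneg fun v =>
      (monotoneOn_id.monovaryOn strictMonoOn_log.monotoneOn).sub_mul_sub_nonneg
        (hf0 v) (maxw_pos hρ hT v)
  exact ⟨by linarith, hnonneg, hdiss⟩

/-- Entropy inequality: `∫ (𝓜(f) - f) ln f dv ≤ 0`, and the dissipation
`∫ (𝓜(f) - f)(ln 𝓜(f) - ln f) dv` is nonnegative and equals `-∫ (𝓜(f) - f) ln f dv`. -/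
theorem stmt_10 (f : E3 → ℝ) (hf : Measurable f) (hf0 : ∀ v, 0 < f v)
    (hint : Integrable (fun v => (1 + ‖v‖ ^ 2) * f v))
    (hρ : 0 < dens f) (hT : 0 < temp f)
    (hlog : Integrable (fun v => (maxw f v - f v) * Real.log (f v))) :
    (∫ v, (maxw f v - f v) * Real.log (f v)) ≤ 0 ∧
    0 ≤ ∫ v, (maxw f v - f v) * (Real.log (maxw f v) - Real.log (f v)) ∧
    (∫ v, (maxw f v - f v) * (Real.log (maxw f v) - Real.log (f v)))
      = -∫ v, (maxw f v - f v) * Real.log (f v) :=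
  stmt_10_general f hf0 hint hρ hT hlog

end
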